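/- Let σ_k, μ be absolutely continuous measures in W₂(ℝⁿ), P, P_k ∈ O(n) with P = [θ₁,…,θₙ], γ_k ∈ [0,1], and σ_{k+1} = ((1-γ_k)id + γ_k T^j_{σ_k,μ;P_k})_♯σ_k. Then Σ_{i=1}^{j} W₂²(σ_{k+1}^{θᵢ}, μ^{θᵢ}) ≤ ‖id - T^j_{σ_k,μ;P}‖²_{L²(σ_k)} + γ_k² ‖id - T^j_{σ_k,μ;P_k}‖²_{L²(σ_k)} - 2γ_k ⟨id - T^j_{σ_k,μ;P}, id - T^j_{σ_k,μ;P_k}⟩_{L²(σ_k)}. -/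

import Mathlib

open MeasureTheory
open scoped ENNReal RealInnerProductSpace

noncomputable section

abbrev Eu (n : ℕ) := EuclideanSpace ℝ (Fin n)

def W2sq {X : Type*} [MeasurableSpace X] [NormedAddCommGroup X] (σ μ : Measure X) : ℝ≥0∞ :=
  ⨅ (π : Measure (X × X)) (_ : π.map Prod.fst = σ ∧ π.map Prod.snd = μ),
    ∫⁻ p, (‖p.1 - p.2‖₊ : ℝ≥0∞) ^ 2 ∂π

def W2 {X : Type*} [MeasurableSpace X] [NormedAddCommGroup X] (σ μ : Measure X) : ℝ≥0∞ :=
  W2sq σ μ ^ (1/2 : ℝ)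

def cdf' (μ : Measure ℝ) (x : ℝ) : ℝ := (μ (Set.Iic x)).toReal

def qf (μ : Measure ℝ) (y : ℝ) : ℝ := sInf {z : ℝ | y ≤ cdf' μ z}

def otMap1d (σ μ : Measure ℝ) (x : ℝ) : ℝ := qf μ (cdf' σ x)

def proj {n : ℕ} (θ : Eu n) (x : Eu n) : ℝ := (inner ℝ x θ : ℝ)

def sliceOf {n : ℕ} (σ : Measure (Eu n)) (θ : Eu n) : Measure ℝ := σ.map (proj θ)

def sliceMap {n : ℕ} (σ μ : Measure (Eu n)) (θ : Fin n → Eu n) (j : ℕ) (x : Eu n) : Eu n :=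
  ∑ i : Fin n,
    (if (i : ℕ) < j then otMap1d (sliceOf σ (θ i)) (sliceOf μ (θ i)) (proj (θ i) x)
     else proj (θ i) x) • θ i

def singleSlice {n : ℕ} (σ μ : Measure (Eu n)) (θ : Eu n) (x : Eu n) : Eu n :=
  x + (otMap1d (sliceOf σ θ) (sliceOf μ θ) (proj θ x) - proj θ x) • θ

def FiniteSecondMoment {X : Type*} [MeasurableSpace X] [NormedAddCommGroup X]
    (μ : Measure X) : Prop :=
  ∫⁻ x, (‖x‖₊ : ℝ≥0∞) ^ 2 ∂μ < ⊤

/-!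
For `i < j` the `i`-th coordinate of the slice-matching map `T_θ` in the basis `θ` is the
monotone rearrangement `qf μ^θᵢ ∘ cdf σ^θᵢ`, which pushes the atomless slice `σ^θᵢ` to `μ^θᵢ`
(the cdf of an atomless measure pushes it to the uniform law, and `qf μ y ≤ z ↔ y ≤ cdf μ z`).
Hence with `S = (1 - γ) id + γ T_η` the pushforward of `σ` under `(⟪S ·, θᵢ⟫, ⟪T_θ ·, θᵢ⟫)`
couples the slices of `S♯σ` and `μ`, so `W₂²(…) ≤ ∫ ⟪S - T_θ, θᵢ⟫²`. Bessel's inequality bounds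
the sum over `i` by `‖S - T_θ‖²_{L²(σ)}`, and `S - T_θ = (id - T_θ) - γ (id - T_η)` expands to
the right-hand side.
-/

open Set Filter Topology ProbabilityTheory

section Quantile

variable {μ : Measure ℝ} [IsProbabilityMeasure μ]

lemma cdf'_eq_cdf : cdf' μ = cdf μ :=
  funext fun x => (cdf_eq_real μ x).symm

lemma continuous_cdf [NullSingletonClass μ] : Continuous (cdf μ) := by
  refine continuous_iff_continuousAt.2 fun x => ?_
  have h := StieltjesFunction.measure_singleton (cdf μ) x
  rw [measure_cdf, measure_singleton, eq_comm, ENNReal.ofReal_eq_zero] at h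
  rw [(cdf μ).mono.continuousAt_iff_leftLim_eq_rightLim, (cdf μ).rightLim_eq]
  exact le_antisymm ((cdf μ).mono.leftLim_le le_rfl) (by linarith)

lemma measure_cdf_le [NullSingletonClass μ] {t : ℝ} (ht0 : 0 ≤ t) (ht1 : t ≤ 1) :
    μ {x | cdf μ x ≤ t} = ENNReal.ofReal t := by
  rcases ht1.eq_or_lt with rfl | ht1
  · simp [cdf_le_one]
  set S := {x | cdf μ x ≤ t}
  rcases S.eq_empty_or_nonempty with hS | hS
  · obtain rfl : t = 0 := by
      refine le_antisymm (not_lt.1 fun ht => ?_) ht0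
      obtain ⟨x, hx⟩ := ((tendsto_cdf_atBot μ).eventually_lt_const ht).exists
      exact hS.subset (show x ∈ S from hx.le)
    simp [hS]
  have hbdd : BddAbove S := by
    obtain ⟨b, hb⟩ := ((tendsto_cdf_atTop μ).eventually_const_lt ht1).exists
    exact ⟨b, fun x hx => le_of_lt (lt_of_not_ge fun hbx =>
      (hb.trans_le (monotone_cdf μ hbx)).not_ge hx)⟩
  -- `S` is a closed down-set, hence `S = Iic s`, and `cdf μ s = t` by continuity.
  set s := sSup S
  have hsS : s ∈ S := (isClosed_le continuous_cdf continuous_const).csSup_mem hS hbdd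
  have hS_eq : S = Iic s :=
    Subset.antisymm (fun x hx => le_csSup hbdd hx) fun x hx => (monotone_cdf μ hx).trans hsS
  have hcdf : cdf μ s = t := by
    refine le_antisymm hsS (ge_of_tendsto (continuous_cdf.continuousAt.tendsto.mono_left
      nhdsWithin_le_nhds) (eventually_nhdsWithin_of_forall (s := Ioi s) fun x hx => ?_))
    exact le_of_lt (lt_of_not_ge fun h => hx.not_ge (le_csSup hbdd h))
  rw [hS_eq, ← ofReal_cdf, hcdf]

lemma ae_cdf_mem_Ioo [NullSingletonClass μ] : ∀ᵐ x ∂μ, cdf μ x ∈ Ioo 0 1 := by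
  have hpos : ∀ᵐ x ∂μ, 0 < cdf μ x := by
    simpa [ae_iff] using measure_cdf_le (μ := μ) le_rfl zero_le_one
  have hlt : ∀ᵐ x ∂μ, cdf μ x < 1 := by
    rw [ae_iff_measure_eq (measurableSet_lt (monotone_cdf μ).measurable
      measurable_const).nullMeasurableSet, measure_univ]
    refine le_antisymm prob_le_one (le_of_forall_lt_imp_le_of_dense fun c hc => ?_)
    have hc' : c.toReal < 1 := by
      simpa using ENNReal.toReal_strict_mono ENNReal.one_ne_top hc
    calc c = μ {x | cdf μ x ≤ c.toReal} := by
          rw [measure_cdf_le ENNReal.toReal_nonneg hc'.le, ENNReal.ofReal_toReal hc.ne_top]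
      _ ≤ μ {x | cdf μ x < 1} := measure_mono fun x (hx : _ ≤ _) => hx.trans_lt hc'
  filter_upwards [hpos, hlt] with x h0 h1 using ⟨h0, h1⟩

lemma qf_eq (y : ℝ) : qf μ y = sInf {z | y ≤ cdf μ z} := by
  rw [qf, cdf'_eq_cdf]

lemma qf_le_iff {y z : ℝ} (hy : y ∈ Ioo 0 1) : qf μ y ≤ z ↔ y ≤ cdf μ z := by
  have hne : {z | y ≤ cdf μ z}.Nonempty :=
    ((tendsto_cdf_atTop μ).eventually_const_lt hy.2).exists.imp fun _ => le_of_lt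
  have hbdd : BddBelow {z | y ≤ cdf μ z} := by
    obtain ⟨w, hw⟩ := ((tendsto_cdf_atBot μ).eventually_lt_const hy.1).exists
    exact ⟨w, fun z hz => le_of_lt (lt_of_not_ge fun hzw =>
      (hz.trans (monotone_cdf μ hzw)).not_gt hw)⟩
  rw [qf_eq]
  refine ⟨fun h => ?_, fun h => csInf_le hbdd h⟩
  refine ge_of_tendsto ((cdf μ).right_continuous z |>.tendsto.mono_left
    (nhdsWithin_mono _ Ioi_subset_Ici_self)) (eventually_nhdsWithin_of_forall fun r hr => ?_)
  obtain ⟨w, hw, hwr⟩ := exists_lt_of_csInf_lt hne (h.trans_lt hr)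
  exact hw.trans (monotone_cdf μ hwr.le)

lemma monotoneOn_qf : MonotoneOn (qf μ) (Ioo 0 1) := fun _ ha _ hb hab =>
  (qf_le_iff ha).2 (hab.trans ((qf_le_iff hb).1 le_rfl))

lemma qf_of_nonpos {y : ℝ} (hy : y ≤ 0) : qf μ y = 0 := by
  have h : {z | y ≤ cdf μ z} = univ := eq_univ_of_forall fun z => hy.trans (cdf_nonneg μ z)
  rw [qf_eq, h, Real.sInf_univ]

lemma qf_of_one_lt {y : ℝ} (hy : 1 < y) : qf μ y = 0 := by
  have h : {z | y ≤ cdf μ z} = ∅ :=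
    eq_empty_of_forall_notMem fun z hz => (hy.trans_le hz).not_ge (cdf_le_one μ z)
  rw [qf_eq, h, Real.sInf_empty]

-- Outside `(0, 1)` the quantile function takes the junk values of `sInf` on unbounded or empty
-- sets; these are constant off the point `1`.
lemma measurable_qf : Measurable (qf μ) := by
  refine measurable_of_restrict_of_restrict_compl (s := Ioo 0 1) measurableSet_Ioo ?_ ?_
  · have h : Monotone ((Ioo 0 1).domRestrict (qf μ)) := fun a b hab => monotoneOn_qf a.2 b.2 hab
    exact h.measurable
  · have h : (Ioo (0 : ℝ) 1)ᶜ.domRestrict (qf μ) =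
        fun y : ((Ioo (0 : ℝ) 1)ᶜ : Set ℝ) => if (y : ℝ) = 1 then qf μ 1 else 0 := by
      ext ⟨y, hy⟩
      simp only [mem_compl_iff, mem_Ioo, not_and_or, not_lt] at hy
      split_ifs with h1
      · simp only [domRestrict_apply] at h1 ⊢
        rw [h1]
      rcases hy with hy | hy
      · exact qf_of_nonpos hy
      · exact qf_of_one_lt (lt_of_le_of_ne hy (Ne.symm h1))
    rw [h]
    exact Measurable.ite (measurableSet_eq_fun measurable_subtype_coe measurable_const)
      measurable_const measurable_const

lemma measurable_otMap1d (σ : Measure ℝ) [IsProbabilityMeasure σ] : Measurable (otMap1d σ μ) := by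
  rw [show otMap1d σ μ = qf μ ∘ cdf σ by ext; simp [otMap1d, cdf'_eq_cdf]]
  exact measurable_qf.comp (monotone_cdf σ).measurable

theorem map_otMap1d (σ : Measure ℝ) [IsProbabilityMeasure σ] [NullSingletonClass σ] :
    σ.map (otMap1d σ μ) = μ := by
  have hm := measurable_otMap1d (μ := μ) σ
  have := Measure.isProbabilityMeasure_map (μ := σ) hm.aemeasurable
  refine Measure.ext_of_Iic _ _ fun z => ?_
  have hpre : otMap1d σ μ ⁻¹' Iic z =ᵐ[σ] {x | cdf σ x ≤ cdf μ z} := by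
    filter_upwards [ae_cdf_mem_Ioo (μ := σ)] with x hx
    simp only [otMap1d, cdf'_eq_cdf, preimage, mem_Iic]
    exact propext (qf_le_iff hx)
  rw [Measure.map_apply hm measurableSet_Iic, measure_congr hpre,
    measure_cdf_le (cdf_nonneg μ z) (cdf_le_one μ z), ofReal_cdf]

end Quantile

section Slices

variable {n : ℕ}

@[fun_prop]
lemma measurable_proj (θ : Eu n) : Measurable (proj θ) :=
  (continuous_id.inner (𝕜 := ℝ) continuous_const).measurable

instance (σ : Measure (Eu n)) [IsProbabilityMeasure σ] (θ : Eu n) :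
    IsProbabilityMeasure (sliceOf σ θ) :=
  Measure.isProbabilityMeasure_map (measurable_proj θ).aemeasurable

lemma nullSingletonClass_sliceOf {σ : Measure (Eu n)} (hac : σ ≪ volume) {θ : Eu n} (hθ : θ ≠ 0) :
    NullSingletonClass (sliceOf σ θ) := by
  refine ⟨fun a => ?_⟩
  rw [sliceOf, Measure.map_apply (measurable_proj θ) (measurableSet_singleton a)]
  refine hac ?_
  rcases (proj θ ⁻¹' {a}).eq_empty_or_nonempty with h | ⟨x₀, hx₀⟩
  · simp [h]
  -- a level set of `proj θ` is a translate of the hyperplane `θᗮ`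
  have hK : (ℝ ∙ θ)ᗮ ≠ ⊤ := by
    rwa [Ne, Submodule.orthogonal_eq_top_iff, Submodule.span_singleton_eq_bot]
  have hset : proj θ ⁻¹' {a} = (fun x => -x₀ + x) ⁻¹' ((ℝ ∙ θ)ᗮ : Set (Eu n)) := by
    ext x
    simp only [mem_preimage, mem_singleton_iff, SetLike.mem_coe,
      Submodule.mem_orthogonal_singleton_iff_inner_right, inner_add_right, inner_neg_right]
    rw [real_inner_comm x₀, real_inner_comm x]
    change ⟪x₀, θ⟫ = a at hx₀
    change ⟪x, θ⟫ = a ↔ _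
    constructor <;> intro h <;> linarith
  rw [hset, measure_preimage_add]
  exact Measure.addHaar_submodule volume _ hK

variable (σ μ : Measure (Eu n)) {θ : Fin n → Eu n} (j : ℕ)

lemma proj_sliceMap (hθ : Orthonormal ℝ θ) (i : Fin n) (x : Eu n) :
    proj (θ i) (sliceMap σ μ θ j x)
      = if (i : ℕ) < j then otMap1d (sliceOf σ (θ i)) (sliceOf μ (θ i)) (proj (θ i) x)
        else proj (θ i) x := by
  rw [sliceMap, proj, real_inner_comm]
  exact hθ.inner_right_fintype _ i

variable [IsProbabilityMeasure σ] [IsProbabilityMeasure μ]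

lemma measurable_sliceMap : Measurable (sliceMap σ μ θ j) := by
  refine Finset.measurable_sum _ fun i _ => Measurable.smul_const ?_ _
  split_ifs
  · exact (measurable_otMap1d _).comp (measurable_proj _)
  · exact measurable_proj _

lemma map_proj_sliceMap (hac : σ ≪ volume) (hθ : Orthonormal ℝ θ) (i : Fin n) :
    σ.map (proj (θ i) ∘ sliceMap σ μ θ j)
      = if (i : ℕ) < j then sliceOf μ (θ i) else sliceOf σ (θ i) := by
  have := nullSingletonClass_sliceOf hac (hθ.ne_zero i)
  have h : proj (θ i) ∘ sliceMap σ μ θ j = fun x => proj (θ i) (sliceMap σ μ θ j x) := rfl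
  simp only [h, proj_sliceMap σ μ j hθ]
  split_ifs
  · exact (Measure.map_map (measurable_otMap1d _) (measurable_proj _)).symm.trans
      (map_otMap1d (sliceOf σ (θ i)))
  · rfl

end Slices

section L2

lemma FiniteSecondMoment.memLp_id {X : Type*} [NormedAddCommGroup X] [MeasurableSpace X]
    [OpensMeasurableSpace X] [SecondCountableTopology X] {μ : Measure X}
    (h : FiniteSecondMoment μ) : MemLp id 2 μ := by
  refine (memLp_two_iff_integrable_sq_norm aestronglyMeasurable_id).2 ⟨by fun_prop, ?_⟩
  have h' : ∫⁻ x, ‖x‖ₑ ^ 2 ∂μ < ⊤ := h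
  simpa [HasFiniteIntegral, enorm_pow] using h'

variable {α E : Type*} {m : MeasurableSpace α} {μ : Measure α}
  [NormedAddCommGroup E] [InnerProductSpace ℝ E] {f g : α → E}

lemma MeasureTheory.MemLp.integrable_inner (hf : MemLp f 2 μ) (hg : MemLp g 2 μ) :
    Integrable (fun x => ⟪f x, g x⟫) μ :=
  (L2.integrable_inner (𝕜 := ℝ) (hf.toLp f) (hg.toLp g)).congr <| by
    filter_upwards [hf.coeFn_toLp, hg.coeFn_toLp] with x hfx hgx
    rw [hfx, hgx]

lemma integral_norm_sub_smul_sq (hf : MemLp f 2 μ) (hg : MemLp g 2 μ) (γ : ℝ) :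
    ∫ x, ‖f x - γ • g x‖ ^ 2 ∂μ
      = ∫ x, ‖f x‖ ^ 2 ∂μ + γ ^ 2 * ∫ x, ‖g x‖ ^ 2 ∂μ - 2 * γ * ∫ x, ⟪f x, g x⟫ ∂μ := by
  have hf2 := (memLp_two_iff_integrable_sq_norm hf.1).1 hf
  have hg2 := (memLp_two_iff_integrable_sq_norm hg.1).1 hg
  have hexp : ∀ x, ‖f x - γ • g x‖ ^ 2
      = ‖f x‖ ^ 2 + γ ^ 2 * ‖g x‖ ^ 2 - 2 * γ * ⟪f x, g x⟫ := fun x => by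
    rw [norm_sub_sq_real, inner_smul_right, norm_smul, mul_pow, Real.norm_eq_abs, sq_abs]
    ring
  simp_rw [hexp]
  rw [integral_sub, integral_add, integral_const_mul, integral_const_mul]
  exacts [hf2, hg2.const_mul _, hf2.add (hg2.const_mul _), (hf.integrable_inner hg).const_mul _]

lemma Orthonormal.sum_integral_inner_sq_le {ι : Type*} [Fintype ι] {v : ι → E}
    (hv : Orthonormal ℝ v) (hf : MemLp f 2 μ) :
    ∑ i, ∫ x, ⟪f x, v i⟫ ^ 2 ∂μ ≤ ∫ x, ‖f x‖ ^ 2 ∂μ := by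
  have hi : ∀ i, Integrable (fun x => ⟪f x, v i⟫ ^ 2) μ := fun i =>
    (hf.inner_const (v i)).integrable_sq
  rw [← integral_finsetSum _ fun i _ => hi i]
  refine integral_mono (integrable_finsetSum _ fun i _ => hi i)
    ((memLp_two_iff_integrable_sq_norm hf.1).1 hf) fun x => ?_
  simpa [real_inner_comm] using hv.sum_inner_products_le (s := Finset.univ) (x := f x)

end L2

lemma W2sq_map_le {X E : Type*} [MeasurableSpace X] [NormedAddCommGroup E] [MeasurableSpace E]
    [BorelSpace E] [SecondCountableTopology E] (σ : Measure X) {f g : X → E}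
    (hf : Measurable f) (hg : Measurable g) :
    W2sq (σ.map f) (σ.map g) ≤ ∫⁻ x, (‖f x - g x‖₊ : ℝ≥0∞) ^ 2 ∂σ := by
  have hfg : Measurable fun x => (f x, g x) := hf.prodMk hg
  refine (iInf₂_le (σ.map fun x => (f x, g x))
    ⟨Measure.map_map measurable_fst hfg, Measure.map_map measurable_snd hfg⟩).trans_eq ?_
  exact lintegral_map (by fun_prop) hfg

section SliceMatching

variable {n : ℕ} {σ μ : Measure (Eu n)} [IsProbabilityMeasure σ] [IsProbabilityMeasure μ]
  {θ : Fin n → Eu n} {j : ℕ}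

lemma memLp_sliceMap (hac : σ ≪ volume) (hσ : MemLp id 2 σ) (hμ : MemLp id 2 μ)
    (hθ : Orthonormal ℝ θ) : MemLp (sliceMap σ μ θ j) 2 σ := by
  have hslice : ∀ {ρ : Measure (Eu n)}, MemLp id 2 ρ → ∀ i, MemLp id 2 (sliceOf ρ (θ i)) :=
    fun hρ i => (memLp_map_measure_iff aestronglyMeasurable_id (measurable_proj _).aemeasurable).2
      (hρ.inner_const (θ i))
  have hcoord : ∀ i, MemLp (fun x => proj (θ i) (sliceMap σ μ θ j x)) 2 σ := fun i => by
    refine (memLp_map_measure_iff aestronglyMeasurable_id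
      ((measurable_proj _).comp (measurable_sliceMap σ μ j)).aemeasurable).1 ?_
    rw [map_proj_sliceMap σ μ j hac hθ]
    split_ifs
    exacts [hslice hμ i, hslice hσ i]
  have hsum : sliceMap σ μ θ j = fun x => ∑ i, proj (θ i) (sliceMap σ μ θ j x) • θ i := by
    ext1 x
    simp only [proj_sliceMap σ μ j hθ]
    rfl
  rw [hsum]
  exact memLp_finsetSum _ fun i _ => (memLp_top_const (θ i)).smul (hcoord i)

lemma toReal_W2sq_sliceOf_map_le (hac : σ ≪ volume) (hθ : Orthonormal ℝ θ)
    {S : Eu n → Eu n} (hS : Measurable S) (hST : MemLp (fun x => S x - sliceMap σ μ θ j x) 2 σ)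
    {i : Fin n} (hi : (i : ℕ) < j) :
    (W2sq (sliceOf (σ.map S) (θ i)) (sliceOf μ (θ i))).toReal
      ≤ ∫ x, ⟪S x - sliceMap σ μ θ j x, θ i⟫ ^ 2 ∂σ := by
  have hSθ : sliceOf (σ.map S) (θ i) = σ.map (proj (θ i) ∘ S) :=
    Measure.map_map (measurable_proj _) hS
  have hμθ : sliceOf μ (θ i) = σ.map (proj (θ i) ∘ sliceMap σ μ θ j) := by
    rw [map_proj_sliceMap σ μ j hac hθ, if_pos hi]
  rw [hSθ, hμθ]
  have hT := (measurable_proj (θ i)).comp (measurable_sliceMap σ μ (θ := θ) j)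
  refine ENNReal.toReal_le_of_le_ofReal (integral_nonneg fun _ => sq_nonneg _)
    ((W2sq_map_le σ (by fun_prop) hT).trans_eq ?_)
  rw [ofReal_integral_eq_lintegral_ofReal (hST.inner_const (θ i)).integrable_sq
    (ae_of_all _ fun _ => sq_nonneg _)]
  refine lintegral_congr fun x => ?_
  simp only [Function.comp_apply, proj, ← inner_sub_left]
  rw [← sq_abs, ENNReal.ofReal_pow (abs_nonneg _), ← Real.norm_eq_abs, ofReal_norm]
  rfl

lemma sum_toReal_W2sq_sliceOf_map_le (hac : σ ≪ volume) (hθ : Orthonormal ℝ θ)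
    {S : Eu n → Eu n} (hS : Measurable S) (hST : MemLp (fun x => S x - sliceMap σ μ θ j x) 2 σ) :
    ∑ i : Fin n,
        (if (i : ℕ) < j then (W2sq (sliceOf (σ.map S) (θ i)) (sliceOf μ (θ i))).toReal else 0)
      ≤ ∫ x, ‖S x - sliceMap σ μ θ j x‖ ^ 2 ∂σ :=
  calc _ ≤ ∑ i, ∫ x, ⟪S x - sliceMap σ μ θ j x, θ i⟫ ^ 2 ∂σ := Finset.sum_le_sum fun i _ => by
        split_ifs with hi
        · exact toReal_W2sq_sliceOf_map_le hac hθ hS hST hi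
        · exact integral_nonneg fun _ => sq_nonneg _
    _ ≤ _ := hθ.sum_integral_inner_sq_le hST

end SliceMatching

/-- `θ` are the columns of the orthogonal matrix `P`, and `η` those of the matrix `P_k` used in
the step producing `σ_{k+1}`. -/
theorem stmt_11_general {n j : ℕ}
    (σk μ : Measure (Eu n)) [IsProbabilityMeasure σk] [IsProbabilityMeasure μ]
    (hacσ : σk ≪ volume)
    (hσ2 : FiniteSecondMoment σk) (hμ2 : FiniteSecondMoment μ)
    (γ : ℝ)
    (θ η : Fin n → Eu n) (hθ : Orthonormal ℝ θ) (hη : Orthonormal ℝ η) :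
    ∑ i : Fin n,
        (if (i : ℕ) < j then
          (W2sq (sliceOf (σk.map (fun x => (1 - γ) • x + γ • sliceMap σk μ η j x)) (θ i))
                (sliceOf μ (θ i))).toReal
         else 0)
      ≤ (∫ x, ‖x - sliceMap σk μ θ j x‖ ^ 2 ∂σk)
        + γ ^ 2 * (∫ x, ‖x - sliceMap σk μ η j x‖ ^ 2 ∂σk)
        - 2 * γ * ∫ x, (inner ℝ (x - sliceMap σk μ θ j x) (x - sliceMap σk μ η j x) : ℝ) ∂σk := by
  have hσ := hσ2.memLp_id
  have hμ := hμ2.memLp_id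
  have hA : MemLp (fun x => x - sliceMap σk μ θ j x) 2 σk := hσ.sub (memLp_sliceMap hacσ hσ hμ hθ)
  have hB : MemLp (fun x => x - sliceMap σk μ η j x) 2 σk := hσ.sub (memLp_sliceMap hacσ hσ hμ hη)
  have hST : ∀ x, ((1 - γ) • x + γ • sliceMap σk μ η j x) - sliceMap σk μ θ j x
      = (x - sliceMap σk μ θ j x) - γ • (x - sliceMap σk μ η j x) := fun x => by
    rw [sub_smul, one_smul, smul_sub]
    abel
  have hS : Measurable fun x => (1 - γ) • x + γ • sliceMap σk μ η j x :=
    (measurable_id.const_smul (1 - γ)).add ((measurable_sliceMap σk μ j).const_smul γ)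
  have hv : MemLp (fun x => ((1 - γ) • x + γ • sliceMap σk μ η j x) - sliceMap σk μ θ j x) 2 σk :=
    (hA.sub (hB.const_smul γ)).ae_eq (ae_of_all _ fun x => (hST x).symm)
  calc _ ≤ ∫ x, ‖((1 - γ) • x + γ • sliceMap σk μ η j x) - sliceMap σk μ θ j x‖ ^ 2 ∂σk :=
        sum_toReal_W2sq_sliceOf_map_le hacσ hθ hS hv
    _ = _ := by
        simp only [hST]
        exact integral_norm_sub_smul_sq hA hB γ

/-- key estimate for the stochastic gradient descent step. Here `θ` are the
columns of a generic orthogonal matrix `P` and `η` the columns of the matrix `P_k`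
used in the iteration step producing `σ_{k+1}`. -/
theorem stmt_11 {n j : ℕ} (hj1 : 1 ≤ j) (hjn : j ≤ n)
    (σk μ : Measure (Eu n)) [IsProbabilityMeasure σk] [IsProbabilityMeasure μ]
    (hacσ : σk ≪ volume) (hacμ : μ ≪ volume)
    (hσ2 : FiniteSecondMoment σk) (hμ2 : FiniteSecondMoment μ)
    (γ : ℝ) (hγ0 : 0 ≤ γ) (hγ1 : γ ≤ 1)
    (θ η : Fin n → Eu n) (hθ : Orthonormal ℝ θ) (hη : Orthonormal ℝ η) :
    ∑ i : Fin n,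
        (if (i : ℕ) < j then
          (W2sq (sliceOf (σk.map (fun x => (1 - γ) • x + γ • sliceMap σk μ η j x)) (θ i))
                (sliceOf μ (θ i))).toReal
         else 0)
      ≤ (∫ x, ‖x - sliceMap σk μ θ j x‖ ^ 2 ∂σk)
        + γ ^ 2 * (∫ x, ‖x - sliceMap σk μ η j x‖ ^ 2 ∂σk)
        - 2 * γ * ∫ x, (inner ℝ (x - sliceMap σk μ θ j x) (x - sliceMap σk μ η j x) : ℝ) ∂σk :=
  stmt_11_general σk μ hacσ hσ2 hμ2 γ θ η hθ hη

end
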